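/- Fix s ∈ ℝ and set μ(t,θ) := Σ_{j=1}^N D_j(t) 𝔥(θ + τ_j) for t ∈ ℝ, θ ∈ [−τ_N, 0], where 𝔥 is the left-continuous Heaviside function (𝔥(τ) = 0 for τ ≤ 0, 𝔥(τ) = 1 for τ > 0). Define k : [s, s+τ_N] × [s, s+τ_N] → ℂ^{d×d} by k(t,τ) := μ(t, τ−t) − Σ_{j=1}^N D_j(t) for τ ∈ [s, t] and k(t,τ) := 0 for τ > t. Then k is a Stieltjes–Volterra kernel of type B^∞ on [s, s+τ_N] × [s, s+τ_N], and k(t,τ) = 0 whenever t − τ < τ_1. -/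

import Mathlib

open MeasureTheory Set
open scoped ENNReal NNReal
open scoped Matrix.Norms.L2Operator

noncomputable section

-- The Lebesgue–Stieltjes measure of a monotone function (zero if not monotone).
open scoped Classical in
noncomputable def monoMeasure (m : ℝ → ℝ) : Measure ℝ :=
  if h : Monotone m then h.stieltjesFunction.measure else 0

/-- The function `f` clamped to the interval `[c,e]`. -/
def clampOn (f : ℝ → ℝ) (c e : ℝ) : ℝ → ℝ := fun x => f (max c (min x e))

/-- Cumulative total variation of the clamped function. -/
def varFun (f : ℝ → ℝ) (c e : ℝ) : ℝ → ℝ :=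
  fun x => (eVariationOn (clampOn f c e) (Icc c x)).toReal

/-- Positive (Jordan) part. -/
def posPartFun (f : ℝ → ℝ) (c e : ℝ) : ℝ → ℝ :=
  fun x => (varFun f c e x + clampOn f c e x - f c) / 2

/-- Negative (Jordan) part. -/
def negPartFun (f : ℝ → ℝ) (c e : ℝ) : ℝ → ℝ :=
  fun x => (varFun f c e x - clampOn f c e x + f c) / 2

/-- Lebesgue–Stieltjes integral of `φ` against (the measure associated with the
restriction to `[c,e)` of) the function `f`, over `[c,e)`. -/
def lsIntIcoR (f : ℝ → ℝ) (c e : ℝ) (φ : ℝ → ℝ) : ℝ :=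
  (∫ x in Ico c e, φ x ∂(monoMeasure (posPartFun f c e))) -
  (∫ x in Ico c e, φ x ∂(monoMeasure (negPartFun f c e)))

/-- Same, over the open interval `(c,e)`. -/
def lsIntIooR (f : ℝ → ℝ) (c e : ℝ) (φ : ℝ → ℝ) : ℝ :=
  (∫ x in Ioo c e, φ x ∂(monoMeasure (posPartFun f c e))) -
  (∫ x in Ioo c e, φ x ∂(monoMeasure (negPartFun f c e)))

/-- Complex Lebesgue–Stieltjes integral `∫_{[c,e)} φ df`. -/
def lsIntIcoC (f : ℝ → ℂ) (c e : ℝ) (φ : ℝ → ℂ) : ℂ :=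
  (lsIntIcoR (fun x => (f x).re) c e (fun x => (φ x).re)
    - lsIntIcoR (fun x => (f x).im) c e (fun x => (φ x).im))
  + Complex.I * (lsIntIcoR (fun x => (f x).re) c e (fun x => (φ x).im)
    + lsIntIcoR (fun x => (f x).im) c e (fun x => (φ x).re))

def lsIntIooC (f : ℝ → ℂ) (c e : ℝ) (φ : ℝ → ℂ) : ℂ :=
  (lsIntIooR (fun x => (f x).re) c e (fun x => (φ x).re)
    - lsIntIooR (fun x => (f x).im) c e (fun x => (φ x).im))
  + Complex.I * (lsIntIooR (fun x => (f x).re) c e (fun x => (φ x).im)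
    + lsIntIooR (fun x => (f x).im) c e (fun x => (φ x).re))

/-- `∫_{[c,e)} dF(τ) G(τ)` for matrix-valued `F` (the integrator) and `G`. -/
def lsIntIcoMM {d : ℕ} (F : ℝ → Matrix (Fin d) (Fin d) ℂ) (c e : ℝ)
    (G : ℝ → Matrix (Fin d) (Fin d) ℂ) : Matrix (Fin d) (Fin d) ℂ :=
  Matrix.of fun i k => ∑ j, lsIntIcoC (fun τ => F τ i j) c e (fun τ => G τ j k)

/-- `∫_{[c,e)} dF(τ) g(τ)` for matrix-valued `F` and vector-valued `g`. -/
def lsIntIcoMV {d : ℕ} (F : ℝ → Matrix (Fin d) (Fin d) ℂ) (c e : ℝ)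
    (g : ℝ → Fin d → ℂ) : Fin d → ℂ :=
  fun i => ∑ j, lsIntIcoC (fun τ => F τ i j) c e (fun τ => g τ j)

def lsIntIooMV {d : ℕ} (F : ℝ → Matrix (Fin d) (Fin d) ℂ) (c e : ℝ)
    (g : ℝ → Fin d → ℂ) : Fin d → ℂ :=
  fun i => ∑ j, lsIntIooC (fun τ => F τ i j) c e (fun τ => g τ j)

instance matrixMeasurableSpace {d : ℕ} : MeasurableSpace (Matrix (Fin d) (Fin d) ℂ) :=
  inferInstanceAs (MeasurableSpace (Fin d → Fin d → ℂ))

/-- A Stieltjes–Volterra kernel of type `B^∞` on `[a,b] × [a,b]`. -/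
def IsSVKernel (d : ℕ) (a b : ℝ) (κ : ℝ → ℝ → Matrix (Fin d) (Fin d) ℂ) : Prop :=
  Measurable ((Icc a b ×ˢ Icc a b).restrict (fun p : ℝ × ℝ => κ p.1 p.2)) ∧
  (∀ t ∈ Icc a b, ∀ τ ∈ Icc a b, t ≤ τ → κ t τ = 0) ∧
  (∀ t ∈ Icc a b, ∀ x ∈ Icc a b, ContinuousWithinAt (κ t) (Icc a b ∩ Iio x) x) ∧
  (∃ C : ℝ, ∀ t ∈ Icc a b, eVariationOn (κ t) (Icc a b) ≤ ENNReal.ofReal C) ∧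
  (∀ ε > (0:ℝ), ∃ η > (0:ℝ), ∀ t ∈ Icc a b, ∀ τ ∈ Icc a b, 0 < t - τ → t - τ < η →
      eVariationOn (κ t) (Ico τ t) < ENNReal.ofReal ε)

/-- The norm `‖κ‖_{[a,b]} = sup_t ‖κ(t,·)‖_{BV([a,b])}` (base point `b`). -/
def KNorm (d : ℕ) (a b : ℝ) (κ : ℝ → ℝ → Matrix (Fin d) (Fin d) ℂ) : ℝ≥0∞ :=
  ⨆ t ∈ Icc a b, eVariationOn (κ t) (Icc a b)

/-- `ρ` is a resolvent of the kernel `κ`. -/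
def IsResolvent (d : ℕ) (a b : ℝ) (κ ρ : ℝ → ℝ → Matrix (Fin d) (Fin d) ℂ) : Prop :=
  IsSVKernel d a b ρ ∧
  ∀ t ∈ Icc a b, ∀ β ∈ Icc a b,
    ρ t β = -κ t β + lsIntIcoMM (κ t) β t (fun τ => ρ τ β)

/-- The left-continuous Heaviside function: `𝔥 x = 0` for `x ≤ 0` and `1` for `x > 0`. -/
noncomputable def lcHeaviside (x : ℝ) : ℝ := if 0 < x then 1 else 0

/-!
Below the diagonal, the `j`-th delay contributes `𝔥(τ' - t + τⱼ) Dⱼ(t) - Dⱼ(t)`, i.e. the step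
`-Dⱼ(t)` on `τ' ≤ t - τⱼ` and `0` after it. Hence `k(t,·)` is a sum of left-continuous steps: its
variation is at most `∑ⱼ ‖Dⱼ(t)‖`, bounded on compacts by continuity of the `Dⱼ`, and it vanishes
identically on `(t - τ₁, ∞)`, which makes the variation on `[τ', t)` zero once `t - τ' < τ₁`.
The paper's `τ₁, …, τ_N` are `τ 0, …, τ (Fin.last N)` here.
-/

section Variation

variable {α E : Type*} [LinearOrder α] [SeminormedAddCommGroup E]

lemma eVariationOn_add_le (f g : α → E) (s : Set α) :
    eVariationOn (f + g) s ≤ eVariationOn f s + eVariationOn g s := by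
  refine iSup_le fun ⟨n, u, hu, us⟩ => ?_
  calc ∑ i ∈ Finset.range n, edist ((f + g) (u (i + 1))) ((f + g) (u i))
      ≤ ∑ i ∈ Finset.range n,
          (edist (f (u (i + 1))) (f (u i)) + edist (g (u (i + 1))) (g (u i))) :=
        Finset.sum_le_sum fun i _ => edist_add_add_le _ _ _ _
    _ = ∑ i ∈ Finset.range n, edist (f (u (i + 1))) (f (u i))
        + ∑ i ∈ Finset.range n, edist (g (u (i + 1))) (g (u i)) :=
        Finset.sum_add_distrib
    _ ≤ eVariationOn f s + eVariationOn g s :=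
        add_le_add (eVariationOn.sum_le hu us) (eVariationOn.sum_le hu us)

lemma eVariationOn_sum_le {ι : Type*} (t : Finset ι) (f : ι → α → E) (s : Set α) :
    eVariationOn (∑ j ∈ t, f j) s ≤ ∑ j ∈ t, eVariationOn (f j) s := by
  classical
  induction t using Finset.induction with
  | empty => simp [eVariationOn.eq_zero_iff]
  | insert a t ha ih =>
    rw [Finset.sum_insert ha, Finset.sum_insert ha]
    exact (eVariationOn_add_le _ _ _).trans (add_le_add le_rfl ih)

-- The step factors monotonically through the two-point order `Bool`, where the variation is one jump.
lemma eVariationOn_ite_le_le_enorm (c : α) (A : E) (s : Set α) :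
    eVariationOn (fun x => if x ≤ c then A else 0) s ≤ ‖A‖ₑ := by
  have hφ : Monotone fun x : α => decide (c < x) := fun x y hxy => by
    simpa [Bool.le_iff_imp] using fun hcx : c < x => hcx.trans_le hxy
  have hstep : (fun x => if x ≤ c then A else 0)
      = (fun b : Bool => if b then 0 else A) ∘ fun x => decide (c < x) := by
    funext x
    by_cases hxc : x ≤ c <;> simp [hxc]
  calc eVariationOn (fun x => if x ≤ c then A else 0) s
      ≤ eVariationOn (fun b : Bool => if b then 0 else A) {false, true} := by
        rw [hstep]
        exact eVariationOn.comp_le_of_monotoneOn _ _ (hφ.monotoneOn _)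
          fun x _ => by simp [le_or_gt]
    _ = ‖A‖ₑ := by simp [edist_zero_right]

lemma continuousWithinAt_Iio_ite_le [TopologicalSpace α] [OrderTopology α] (c x : α) (A : E) :
    ContinuousWithinAt (fun y => if y ≤ c then A else 0) (Iio x) x := by
  rcases le_or_gt x c with hxc | hcx
  · exact continuousWithinAt_const.congr (fun y hy => if_pos ((mem_Iio.1 hy).le.trans hxc))
      (if_pos hxc)
  · refine ((continuousAt_const (y := (0 : E))).congr ?_).continuousWithinAt
    filter_upwards [Ioi_mem_nhds hcx] with y hy
    exact (if_neg (not_le.2 hy)).symm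

end Variation

section DelayKernel

variable {ι E : Type*} [Fintype ι] [AddCommGroup E] [Module ℝ E] (τ : ι → ℝ) (D : ι → ℝ → E)

def delayKernel (t x : ℝ) : E :=
  if x ≤ t then (∑ j, lcHeaviside (x - t + τ j) • D j t) - ∑ j, D j t else 0

lemma delayKernel_eq_zero {t x : ℝ} (h : ∀ j, t - x < τ j) : delayKernel τ D t x = 0 := by
  unfold delayKernel
  split_ifs
  · simp [lcHeaviside, fun j => show 0 < x - t + τ j by linarith [h j]]
  · rfl

variable {τ}

lemma delayKernel_eq_sum_ite (hτ : ∀ j, 0 ≤ τ j) (t x : ℝ) :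
    delayKernel τ D t x = ∑ j, if x ≤ t - τ j then -D j t else 0 := by
  unfold delayKernel
  split_ifs with hxt
  · rw [← Finset.sum_sub_distrib]
    refine Finset.sum_congr rfl fun j _ => ?_
    by_cases hj : x ≤ t - τ j
    · simp [lcHeaviside, hj, show ¬ 0 < x - t + τ j by linarith]
    · simp [lcHeaviside, hj, show 0 < x - t + τ j by linarith]
  · exact (Finset.sum_eq_zero fun j _ => if_neg (by linarith [hτ j])).symm

end DelayKernel

section DelayKernelVariation

variable {ι E : Type*} [Fintype ι] [SeminormedAddCommGroup E] [Module ℝ E]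
  {τ : ι → ℝ} (D : ι → ℝ → E)

lemma continuousWithinAt_Iio_delayKernel (hτ : ∀ j, 0 ≤ τ j) (t x : ℝ) :
    ContinuousWithinAt (delayKernel τ D t) (Iio x) x := by
  rw [show delayKernel τ D t = fun y => ∑ j, if y ≤ t - τ j then -D j t else 0 from
    funext (delayKernel_eq_sum_ite D hτ t)]
  exact tendsto_finsetSum _ fun j _ => continuousWithinAt_Iio_ite_le _ _ _

lemma eVariationOn_delayKernel_le (hτ : ∀ j, 0 ≤ τ j) (t : ℝ) (s : Set ℝ) :
    eVariationOn (delayKernel τ D t) s ≤ ∑ j, ‖D j t‖ₑ := by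
  rw [show delayKernel τ D t = ∑ j, fun y => if y ≤ t - τ j then -D j t else 0 by
    funext y; simp [Finset.sum_apply, delayKernel_eq_sum_ite D hτ]]
  refine (eVariationOn_sum_le _ _ _).trans (Finset.sum_le_sum fun j _ => ?_)
  simpa using eVariationOn_ite_le_le_enorm (t - τ j) (-D j t) s

lemma exists_bound_eVariationOn_delayKernel (hτ : ∀ j, 0 ≤ τ j) (hD : ∀ j, Continuous (D j))
    {K : Set ℝ} (hK : IsCompact K) (s : Set ℝ) :
    ∃ C : ℝ, ∀ t ∈ K, eVariationOn (delayKernel τ D t) s ≤ ENNReal.ofReal C := by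
  obtain ⟨C, hC⟩ := hK.exists_bound_of_continuousOn (f := fun t => ∑ j, ‖D j t‖)
    (by fun_prop)
  refine ⟨C, fun t ht => (eVariationOn_delayKernel_le D hτ t s).trans ?_⟩
  calc ∑ j, ‖D j t‖ₑ = ENNReal.ofReal (∑ j, ‖D j t‖) := by
        simp [ENNReal.ofReal_sum_of_nonneg, ofReal_norm]
    _ ≤ ENNReal.ofReal C := ENNReal.ofReal_le_ofReal ((le_abs_self _).trans (hC t ht))

lemma eVariationOn_delayKernel_Ioi_eq_zero {τ₀ : ℝ} (hτ₀ : ∀ j, τ₀ ≤ τ j) (t : ℝ) :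
    eVariationOn (delayKernel τ D t) (Ioi (t - τ₀)) = 0 := by
  refine (eVariationOn.eq_zero_iff _).2 fun x hx y hy => ?_
  have hx' := mem_Ioi.1 hx
  have hy' := mem_Ioi.1 hy
  rw [delayKernel_eq_zero τ D fun j => by linarith [hτ₀ j],
    delayKernel_eq_zero τ D fun j => by linarith [hτ₀ j], edist_self]

lemma measurable_delayKernel_uncurry [MeasurableSpace E] [BorelSpace E]
    [SecondCountableTopology E] (hτ : ∀ j, 0 ≤ τ j) (hD : ∀ j, Continuous (D j)) :
    Measurable fun p : ℝ × ℝ => delayKernel τ D p.1 p.2 := by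
  simp_rw [delayKernel_eq_sum_ite D hτ]
  refine Finset.measurable_sum _ fun j _ => Measurable.ite ?_ ?_ measurable_const
  · exact measurableSet_le measurable_snd (measurable_fst.sub_const _)
  · exact ((hD j).neg.comp continuous_fst).measurable

end DelayKernelVariation

-- `IsSVKernel` uses the product measurable structure on matrices; it is Borel.
instance matrixBorelSpace {d : ℕ} : BorelSpace (Matrix (Fin d) (Fin d) ℂ) :=
  inferInstanceAs (BorelSpace (Fin d → Fin d → ℂ))

theorem delay_kernel_isSVKernel_general
    (d N : ℕ)
    (τ : Fin (N + 1) → ℝ) (hτpos : ∀ j, 0 < τ j) (hτmono : StrictMono τ)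
    (D : Fin (N + 1) → ℝ → Matrix (Fin d) (Fin d) ℂ) (hD : ∀ j, Continuous (D j))
    (s : ℝ)
    (k : ℝ → ℝ → Matrix (Fin d) (Fin d) ℂ)
    (hk : k = fun t τ' => if τ' ≤ t then
      (∑ j, lcHeaviside (τ' - t + τ j) • D j t) - ∑ j, D j t else 0) :
    IsSVKernel d s (s + τ (Fin.last N)) k ∧
    ∀ t ∈ Icc s (s + τ (Fin.last N)), ∀ τ' ∈ Icc s (s + τ (Fin.last N)),
      t - τ' < τ 0 → k t τ' = 0 := by
  subst hk
  have hτ : ∀ j, 0 ≤ τ j := fun j => (hτpos j).le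
  have hτ₀ : ∀ j, τ 0 ≤ τ j := fun j => hτmono.monotone (Fin.zero_le j)
  have hvanish : ∀ t x, t - x < τ 0 → delayKernel τ D t x = 0 := fun t x h =>
    delayKernel_eq_zero τ D fun j => h.trans_le (hτ₀ j)
  refine ⟨⟨?_, ?_, ?_, ?_, ?_⟩, fun t _ x _ h => hvanish t x h⟩
  · exact (measurable_delayKernel_uncurry D hτ hD).comp measurable_subtype_coe
  · exact fun t _ x _ htx => hvanish t x (by linarith [hτpos 0])
  · exact fun t _ x _ => (continuousWithinAt_Iio_delayKernel D hτ t x).mono inter_subset_right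
  · exact exists_bound_eVariationOn_delayKernel D hτ hD isCompact_Icc _
  · refine fun ε hε => ⟨τ 0, hτpos 0, fun t _ x _ _ hxt => ?_⟩
    calc eVariationOn (delayKernel τ D t) (Ico x t)
        ≤ eVariationOn (delayKernel τ D t) (Ioi (t - τ 0)) :=
          eVariationOn.mono _ fun y hy => mem_Ioi.2 (by linarith [hy.1])
      _ = 0 := eVariationOn_delayKernel_Ioi_eq_zero D hτ₀ t
      _ < ENNReal.ofReal ε := ENNReal.ofReal_pos.2 hε

/-- **The kernel of the difference-delay system is a Stieltjes–Volterra kernel of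
type `B^∞`.**

With `μ(t,θ) = ∑ j, 𝔥(θ + τ_j) D_j(t)` (`𝔥` the left-continuous Heaviside function)
and `k(t,τ) = μ(t, τ - t) - ∑_j D_j(t)` for `τ ∈ [s,t]`, `k(t,τ) = 0` for `τ > t`,
the function `k` is a Stieltjes–Volterra kernel of type `B^∞` on
`[s, s+τ_N] × [s, s+τ_N]`, and `k(t,τ) = 0` whenever `t - τ < τ_1`. -/
theorem delay_kernel_isSVKernel
    (d N : ℕ) (hd : 0 < d)
    (τ : Fin (N + 1) → ℝ) (hτpos : ∀ j, 0 < τ j) (hτmono : StrictMono τ)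
    (D : Fin (N + 1) → ℝ → Matrix (Fin d) (Fin d) ℂ) (hD : ∀ j, Continuous (D j))
    (s : ℝ)
    (k : ℝ → ℝ → Matrix (Fin d) (Fin d) ℂ)
    (hk : k = fun t τ' => if τ' ≤ t then
      (∑ j, lcHeaviside (τ' - t + τ j) • D j t) - ∑ j, D j t else 0) :
    IsSVKernel d s (s + τ (Fin.last N)) k ∧
    ∀ t ∈ Icc s (s + τ (Fin.last N)), ∀ τ' ∈ Icc s (s + τ (Fin.last N)),
      t - τ' < τ 0 → k t τ' = 0 :=
  delay_kernel_isSVKernel_general d N τ hτpos hτmono D hD s k hk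

end
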